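/- Let g(x,y) = η²∫_0^T (s+x)^{H-1/2}(s+y)^{H-1/2} ds with η > 0, H ∈ (0,1/2), T > 0, and let F(x,y) = ∂_{xy} e^{g(x,y)} = (∂_x g ∂_y g + ∂_{xy} g) e^g. Then ∂_x F(x,y) < 0 and ∂_y F(x,y) < 0 for all x, y > 0; consequently F(x₁,y₁) > F(x₂,y₂) whenever 0 < x₁ < x₂ and 0 < y₁ < y₂. -/

import Mathlib

open Real MeasureTheory

/-- `g(x,y) = η² ∫_0^T (s+x)^(H-1/2) (s+y)^(H-1/2) ds`. -/
noncomputable def gKer (η H T : ℝ) (x y : ℝ) : ℝ :=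
  η ^ 2 * ∫ s in (0 : ℝ)..T, (s + x) ^ (H - 1/2) * (s + y) ^ (H - 1/2)

/-- `F(x,y) = ∂_{xy} e^{g(x,y)}`. -/
noncomputable def FKer (η H T : ℝ) (x y : ℝ) : ℝ :=
  deriv (fun y' => deriv (fun x' => Real.exp (gKer η H T x' y')) x) y

/-!
With `a = H - 1/2 < 0` and `J p q = ∫_0^T (s+x)^p (s+y)^q ds > 0`, differentiation under the
integral gives `∂_x J p q = p J (p-1) q` and `∂_y J p q = q J p (q-1)`, so every partial
derivative of `g = η² J a a` is a positive multiple of some `J`, with sign fixed by the number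
of factors `a` and `a - 1`. Hence `∂_x F = (g_x² g_y + 2 g_x g_xy + g_xxy + g_xx g_y) e^g` is a
sum of negative terms; `∂_y F < 0` follows from the symmetry `F(x,y) = F(y,x)`, and the
monotonicity from the mean value theorem, one variable at a time.
-/

open intervalIntegral Set Filter Topology

lemma rpow_le_add_rpow_of_mem_Icc {u v z : ℝ} (r : ℝ) (hu : 0 < u) (hz : z ∈ Icc u v) :
    z ^ r ≤ u ^ r + v ^ r := by
  rcases le_total 0 r with hr | hr
  · linarith [rpow_le_rpow (hu.le.trans hz.1) hz.2 hr, rpow_nonneg hu.le r]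
  · linarith [rpow_le_rpow_of_nonpos hu hz.1 hr, rpow_nonneg (hu.le.trans (hz.1.trans hz.2)) r]

noncomputable def kerInt (T p q x y : ℝ) : ℝ := ∫ s in (0 : ℝ)..T, (s + x) ^ p * (s + y) ^ q

section kerInt

variable {T p q x y : ℝ}

lemma kerInt_comm (T p q x y : ℝ) : kerInt T p q x y = kerInt T q p y x := by
  simp only [kerInt, mul_comm]

lemma continuousOn_add_rpow (hT : 0 ≤ T) (hx : 0 < x) (p : ℝ) :
    ContinuousOn (fun s : ℝ => (s + x) ^ p) (uIcc 0 T) := by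
  refine (continuousOn_id.add continuousOn_const).rpow_const fun s hs => Or.inl ?_
  rw [uIcc_of_le hT] at hs
  exact (add_pos_of_nonneg_of_pos hs.1 hx).ne'

lemma intervalIntegrable_kerInt_integrand (hT : 0 ≤ T) (hx : 0 < x) (hy : 0 < y) (p q : ℝ) :
    IntervalIntegrable (fun s : ℝ => (s + x) ^ p * (s + y) ^ q) volume 0 T :=
  ((continuousOn_add_rpow hT hx p).mul (continuousOn_add_rpow hT hy q)).intervalIntegrable

lemma kerInt_pos (hT : 0 < T) (hx : 0 < x) (hy : 0 < y) (p q : ℝ) : 0 < kerInt T p q x y := by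
  refine intervalIntegral_pos_of_pos_on (intervalIntegrable_kerInt_integrand hT.le hx hy p q)
    (fun s hs => ?_) hT
  have := hs.1
  have : 0 < s + x := by linarith
  have : 0 < s + y := by linarith
  positivity

lemma hasDerivAt_kerInt_left (hT : 0 ≤ T) (hx : 0 < x) (hy : 0 < y) :
    HasDerivAt (fun x' => kerInt T p q x' y) (p * kerInt T (p - 1) q x y) x := by
  have hIoc : uIoc (0 : ℝ) T = Ioc 0 T := uIoc_of_le hT
  -- for `x' ∈ (x/2, 3x/2)` and `t ∈ (0, T]`, `t + x'` ranges in `[x/2, T + 3x/2]`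
  have key := hasDerivAt_integral_of_dominated_loc_of_deriv_le
    (F := fun x' s => (s + x') ^ p * (s + y) ^ q)
    (F' := fun x' s => p * ((s + x') ^ (p - 1) * (s + y) ^ q))
    (bound := fun t => |p| * (((x / 2) ^ (p - 1) + (T + 3 * x / 2) ^ (p - 1)) * (t + y) ^ q))
    (μ := volume) (Metric.ball_mem_nhds x (half_pos hx)) ?meas
    (intervalIntegrable_kerInt_integrand hT hx hy p q) ?meas' ?bound ?bound_int ?diff
  · rw [intervalIntegral.integral_const_mul] at key
    exact key.2
  case meas =>
    filter_upwards [eventually_gt_nhds hx] with x' hx'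
    exact (intervalIntegrable_kerInt_integrand hT hx' hy p q).def'.aestronglyMeasurable
  case meas' =>
    exact (intervalIntegrable_kerInt_integrand hT hx hy (p - 1) q).def'.aestronglyMeasurable
      |>.const_mul p
  case bound =>
    refine Eventually.of_forall fun t ht x' hx' => ?_
    rw [hIoc] at ht
    rw [Metric.mem_ball, Real.dist_eq, abs_lt] at hx'
    have hsum := rpow_le_add_rpow_of_mem_Icc (p - 1) (half_pos hx)
      (show t + x' ∈ Icc (x / 2) (T + 3 * x / 2) by constructor <;> linarith [ht.1, ht.2])
    have hb1 : 0 ≤ (t + x') ^ (p - 1) := rpow_nonneg (by linarith [ht.1]) _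
    have hb2 : 0 ≤ (t + y) ^ q := rpow_nonneg (by linarith [ht.1]) _
    rw [norm_mul, Real.norm_eq_abs, Real.norm_eq_abs, abs_of_nonneg (mul_nonneg hb1 hb2)]
    gcongr
  case bound_int =>
    exact ((continuousOn_add_rpow hT hy q).intervalIntegrable.const_mul _).const_mul _
  case diff =>
    refine Eventually.of_forall fun t ht x' hx' => ?_
    rw [hIoc] at ht
    rw [Metric.mem_ball, Real.dist_eq, abs_lt] at hx'
    have htx : t + x' ≠ 0 := by linarith [ht.1, hx'.1]
    exact ((((hasDerivAt_id x').const_add t).rpow_const (p := p) (Or.inl htx)).mul_const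
      ((t + y) ^ q)).congr_deriv (by simp only [id]; ring)

lemma hasDerivAt_kerInt_right (hT : 0 ≤ T) (hx : 0 < x) (hy : 0 < y) :
    HasDerivAt (fun y' => kerInt T p q x y') (q * kerInt T p (q - 1) x y) y := by
  simp only [kerInt_comm T p _ x]
  exact hasDerivAt_kerInt_left hT hy hx

end kerInt

lemma hasDerivAt_mul_add_mul_exp {g gx gy gxy : ℝ → ℝ} {gxx gxxy x : ℝ}
    (hg : HasDerivAt g (gx x) x) (hgx : HasDerivAt gx gxx x) (hgy : HasDerivAt gy (gxy x) x)
    (hgxy : HasDerivAt gxy gxxy x) :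
    HasDerivAt (fun x => (gx x * gy x + gxy x) * exp (g x))
      ((gx x ^ 2 * gy x + 2 * gx x * gxy x + gxxy + gxx * gy x) * exp (g x)) x :=
  (((hgx.mul hgy).add hgxy).mul hg.exp).congr_deriv <| by
    simp only [Pi.add_apply, Pi.mul_apply]
    ring

lemma sq_mul_add_two_mul_add_add_mul_neg {gx gy gxx gxy gxxy : ℝ} (hgx : gx < 0) (hgy : gy < 0)
    (hgxx : 0 < gxx) (hgxy : 0 < gxy) (hgxxy : gxxy < 0) :
    gx ^ 2 * gy + 2 * gx * gxy + gxxy + gxx * gy < 0 := by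
  have h₁ : gx ^ 2 * gy < 0 := mul_neg_of_pos_of_neg (sq_pos_of_neg hgx) hgy
  have h₂ : gx * gxy < 0 := mul_neg_of_neg_of_pos hgx hgxy
  have h₃ : gxx * gy < 0 := mul_neg_of_pos_of_neg hgxx hgy
  linarith

noncomputable def mixedExpKer (T c a x y : ℝ) : ℝ :=
  (c * (a * kerInt T (a - 1) a x y) * (c * (a * kerInt T a (a - 1) x y)) +
    c * (a * (a * kerInt T (a - 1) (a - 1) x y))) * exp (c * kerInt T a a x y)

section mixedExpKer

variable {T c a x y : ℝ}

lemma deriv_deriv_exp_kerInt (hT : 0 ≤ T) (hx : 0 < x) (hy : 0 < y) :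
    deriv (fun y' => deriv (fun x' => exp (c * kerInt T a a x' y')) x) y =
      mixedExpKer T c a x y := by
  have hinner : (fun y' => deriv (fun x' => exp (c * kerInt T a a x' y')) x) =ᶠ[𝓝 y]
      fun y' => exp (c * kerInt T a a x y') * (c * (a * kerInt T (a - 1) a x y')) := by
    filter_upwards [eventually_gt_nhds hy] with y' hy'
    exact ((hasDerivAt_kerInt_left hT hx hy').const_mul c).exp.deriv
  have hg := (hasDerivAt_kerInt_right (p := a) (q := a) hT hx hy).const_mul c
  have hgx := ((hasDerivAt_kerInt_right (p := a - 1) (q := a) hT hx hy).const_mul a).const_mul c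
  rw [hinner.deriv_eq]
  exact (hg.exp.mul hgx).deriv.trans (by rw [mixedExpKer]; ring)

lemma mixedExpKer_comm (T c a x y : ℝ) : mixedExpKer T c a x y = mixedExpKer T c a y x := by
  simp only [mixedExpKer, kerInt_comm T _ _ x y]
  ring

lemma exists_hasDerivAt_mixedExpKer_left_neg (hc : 0 < c) (ha : a < 0) (hT : 0 < T)
    (hx : 0 < x) (hy : 0 < y) :
    ∃ d < 0, HasDerivAt (fun x' => mixedExpKer T c a x' y) d x := by
  have hg := (hasDerivAt_kerInt_left (p := a) (q := a) hT.le hx hy).const_mul c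
  have hgx := ((hasDerivAt_kerInt_left (p := a - 1) (q := a) hT.le hx hy).const_mul a).const_mul c
  have hgy := ((hasDerivAt_kerInt_left (p := a) (q := a - 1) hT.le hx hy).const_mul a).const_mul c
  have hgxy := (((hasDerivAt_kerInt_left (p := a - 1) (q := a - 1) hT.le hx hy).const_mul
    a).const_mul a).const_mul c
  refine ⟨_, mul_neg_of_neg_of_pos ?_ (exp_pos _), hasDerivAt_mul_add_mul_exp hg hgx hgy hgxy⟩
  have hJ (p q : ℝ) : 0 < kerInt T p q x y := kerInt_pos hT hx hy p q
  have ha₁ : a - 1 < 0 := by linarith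
  exact sq_mul_add_two_mul_add_add_mul_neg
    (mul_neg_of_pos_of_neg hc (mul_neg_of_neg_of_pos ha (hJ _ _)))
    (mul_neg_of_pos_of_neg hc (mul_neg_of_neg_of_pos ha (hJ _ _)))
    (mul_pos hc (mul_pos_of_neg_of_neg ha (mul_neg_of_neg_of_pos ha₁ (hJ _ _))))
    (mul_pos hc (mul_pos_of_neg_of_neg ha (mul_neg_of_neg_of_pos ha (hJ _ _))))
    (mul_neg_of_pos_of_neg hc (mul_neg_of_neg_of_pos ha
      (mul_pos_of_neg_of_neg ha (mul_neg_of_neg_of_pos ha₁ (hJ _ _)))))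

lemma strictAntiOn_mixedExpKer_left (hc : 0 < c) (ha : a < 0) (hT : 0 < T) (hy : 0 < y) :
    StrictAntiOn (fun x' => mixedExpKer T c a x' y) (Ioi 0) := by
  refine strictAntiOn_of_deriv_neg (convex_Ioi 0) (fun x hx => ?_) (fun x hx => ?_)
  · obtain ⟨d, -, hd⟩ := exists_hasDerivAt_mixedExpKer_left_neg hc ha hT hx hy
    exact hd.continuousAt.continuousWithinAt
  · rw [interior_Ioi] at hx
    obtain ⟨d, hd_neg, hd⟩ := exists_hasDerivAt_mixedExpKer_left_neg hc ha hT hx hy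
    rwa [hd.deriv]

end mixedExpKer

/-- For `η > 0`, `H ∈ (0,1/2)`, `T > 0`, the function `F = ∂_{xy} e^g` satisfies
`∂_x F < 0` and `∂_y F < 0` on `(0,∞)²`; consequently `F(x₁,y₁) > F(x₂,y₂)` whenever
`0 < x₁ < x₂` and `0 < y₁ < y₂`. -/
theorem FKer_decreasing (η H T : ℝ) (hη : 0 < η)
    (hH : H ∈ Set.Ioo (0 : ℝ) (1/2)) (hT : 0 < T) :
    (∀ x y : ℝ, 0 < x → 0 < y →
      deriv (fun x' => FKer η H T x' y) x < 0 ∧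
      deriv (fun y' => FKer η H T x y') y < 0) ∧
    (∀ x₁ x₂ y₁ y₂ : ℝ, 0 < x₁ → x₁ < x₂ → 0 < y₁ → y₁ < y₂ →
      FKer η H T x₂ y₂ < FKer η H T x₁ y₁) := by
  have hc : 0 < η ^ 2 := pow_pos hη 2
  have ha : H - 1/2 < 0 := by linarith [hH.2]
  set M := mixedExpKer T (η ^ 2) (H - 1/2)
  have hFM (x y : ℝ) (hx : 0 < x) (hy : 0 < y) : FKer η H T x y = M x y :=
    deriv_deriv_exp_kerInt hT.le hx hy
  have hFM' (x y : ℝ) (hx : 0 < x) (hy : 0 < y) : FKer η H T x y = M y x :=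
    (hFM x y hx hy).trans (mixedExpKer_comm ..)
  refine ⟨fun x y hx hy => ⟨?_, ?_⟩, fun x₁ x₂ y₁ y₂ hx₁ hx hy₁ hy => ?_⟩
  · obtain ⟨d, hd_neg, hd⟩ := exists_hasDerivAt_mixedExpKer_left_neg hc ha hT hx hy
    have hev : (fun x' => FKer η H T x' y) =ᶠ[𝓝 x] fun x' => M x' y :=
      (eventually_gt_nhds hx).mono fun x' hx' => hFM x' y hx' hy
    rwa [(hd.congr_of_eventuallyEq hev).deriv]
  · obtain ⟨d, hd_neg, hd⟩ := exists_hasDerivAt_mixedExpKer_left_neg hc ha hT hy hx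
    have hev : (fun y' => FKer η H T x y') =ᶠ[𝓝 y] fun y' => M y' x :=
      (eventually_gt_nhds hy).mono fun y' hy' => hFM' x y' hx hy'
    rwa [(hd.congr_of_eventuallyEq hev).deriv]
  · have hx₂ : 0 < x₂ := hx₁.trans hx
    have hy₂ : 0 < y₂ := hy₁.trans hy
    calc FKer η H T x₂ y₂ = M x₂ y₂ := hFM x₂ y₂ hx₂ hy₂
      _ < M x₁ y₂ := strictAntiOn_mixedExpKer_left hc ha hT hy₂ hx₁ hx₂ hx
      _ = M y₂ x₁ := mixedExpKer_comm ..
      _ < M y₁ x₁ := strictAntiOn_mixedExpKer_left hc ha hT hx₁ hy₁ hy₂ hy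
      _ = FKer η H T x₁ y₁ := (hFM' x₁ y₁ hx₁ hy₁).symm
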